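/- Let K be a field of characteristic 0, r : K → K an automorphism, e ∈ K^× and δ ∈ K^×. Suppose that whenever δ is of the form ω·g/r(g) with ω a root of unity and g ∈ K^×, it is in fact of the form g/r(g); and suppose that the only roots of unity in K of the form f/r(f) equal 1 (condition (S2)); and suppose that α_r(f,n)=1 implies f is an n-th root of unity lying in the fixed field of r (condition (S1)). Then for every n ≥ 1, the sum S_n = Σ_{i=0}^{n-1} α_r(δ,i)·r^i(e) is nonzero. -/

import Mathlib

/-- `α_r(f,n) = f · r(f) ⋯ r^{n-1}(f)`. -/
def alpha {K : Type*} [Field K] (r : K ≃+* K) (f : K) (n : ℕ) : K :=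
  ∏ i ∈ Finset.range n, (r ^ i) f

/-!
If `S_n = 0`, the recursion `e + δ · r(S_n) = S_n + α_r(δ,n) · rⁿ(e)` gives
`α_r(δ,n) = e / rⁿ(e) = α_r(e / r(e), n)`, so `ω := δ · r(e) / e` satisfies `α_r(ω,n) = 1` and
is an `n`-th root of unity by (S1). Then `δ = ω · e / r(e)` is of the form `g / r(g)`, hence so
is `ω`, which forces `ω = 1` by (S2). But for `δ = e / r(e)` every summand of `S_n` equals `e`,
so `S_n = n · e ≠ 0` in characteristic zero.
-/

open Finset

namespace RingAut

variable {R : Type*} [Mul R] [Add R] (f : R ≃+* R)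

lemma pow_succ_apply (i : ℕ) (x : R) : (f ^ (i + 1)) x = (f ^ i) (f x) := by
  rw [pow_succ, mul_apply]

lemma pow_succ_apply' (i : ℕ) (x : R) : (f ^ (i + 1)) x = f ((f ^ i) x) := by
  rw [pow_succ', mul_apply]

end RingAut

namespace alpha

variable {K : Type*} [Field K] (r : K ≃+* K)

@[simp] lemma zero_right (f : K) : alpha r f 0 = 1 :=
  prod_range_zero _

lemma succ (f : K) (n : ℕ) : alpha r f (n + 1) = alpha r f n * (r ^ n) f :=
  prod_range_succ _ _

lemma succ' (f : K) (n : ℕ) : alpha r f (n + 1) = f * r (alpha r f n) := by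
  simp only [alpha, map_prod, prod_range_succ', RingAut.pow_succ_apply', pow_zero,
    RingAut.one_apply]
  ring

lemma zero_left {n : ℕ} (hn : 1 ≤ n) : alpha r 0 n = 0 := by
  obtain ⟨m, rfl⟩ := Nat.exists_eq_add_of_le' hn
  rw [succ', zero_mul]

lemma mul (f g : K) (n : ℕ) : alpha r (f * g) n = alpha r f n * alpha r g n := by
  simp only [alpha, map_mul, prod_mul_distrib]

lemma inv (f : K) (n : ℕ) : alpha r f⁻¹ n = (alpha r f n)⁻¹ := by
  simp only [alpha, map_inv₀, prod_inv_distrib]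

lemma div_apply {x : K} (hx : x ≠ 0) (n : ℕ) : alpha r (x / r x) n = x / (r ^ n) x := by
  induction n with
  | zero => simp [div_self hx]
  | succ n ih =>
    have hrn : (r ^ n) x ≠ 0 := (map_ne_zero _).mpr hx
    rw [succ, ih, map_div₀, ← RingAut.pow_succ_apply, div_mul_div_cancel₀ hrn]

end alpha

section TwistedSum

variable {K : Type*} [Field K] (r : K ≃+* K)

lemma add_mul_map_sum_alpha_mul (δ e : K) (n : ℕ) :
    e + δ * r (∑ i ∈ range n, alpha r δ i * (r ^ i) e) =
      ∑ i ∈ range (n + 1), alpha r δ i * (r ^ i) e := by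
  rw [sum_range_succ', map_sum, mul_sum]
  simp only [alpha.succ', RingAut.pow_succ_apply', map_mul, alpha.zero_right, pow_zero,
    RingAut.one_apply, one_mul, mul_assoc, add_comm e]

lemma alpha_mul_apply_eq_of_sum_eq_zero {δ e : K} {n : ℕ}
    (hS : ∑ i ∈ range n, alpha r δ i * (r ^ i) e = 0) : alpha r δ n * (r ^ n) e = e := by
  have h := add_mul_map_sum_alpha_mul r δ e n
  rwa [hS, map_zero, mul_zero, add_zero, sum_range_succ, hS, zero_add, eq_comm] at h

lemma sum_alpha_div_apply_mul {e : K} (he : e ≠ 0) (n : ℕ) :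
    ∑ i ∈ range n, alpha r (e / r e) i * (r ^ i) e = n * e := by
  have hterm (i : ℕ) : alpha r (e / r e) i * (r ^ i) e = e := by
    rw [alpha.div_apply r he, div_mul_cancel₀ _ ((map_ne_zero _).mpr he)]
  simp only [hterm, sum_const, card_range, nsmul_eq_mul]

end TwistedSum

theorem stmt_18_general {K : Type*} [Field K] [CharZero K] (r : K ≃+* K)
    (e δ : K) (he : e ≠ 0)
    (hδ : (∃ (ω g : K), g ≠ 0 ∧ (∃ n : ℕ, 1 ≤ n ∧ ω ^ n = 1) ∧ δ = ω * (g / r g)) →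
      ∃ g : K, g ≠ 0 ∧ δ = g / r g)
    (hS2 : ∀ f : K, f ≠ 0 → (∃ n : ℕ, 1 ≤ n ∧ (f / r f) ^ n = 1) → f / r f = 1)
    (hS1 : ∀ f : K, f ≠ 0 → ∀ n : ℕ, 1 ≤ n → alpha r f n = 1 →
      f ^ n = 1 ∧ r f = f) :
    ∀ n : ℕ, 1 ≤ n → (∑ i ∈ Finset.range n, alpha r δ i * (r ^ i) e) ≠ 0 := by
  intro n hn hS
  have hre : r e ≠ 0 := (map_ne_zero r).mpr he
  set ω := δ * (e / r e)⁻¹ with hω_def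
  have hω : alpha r ω n = 1 := by
    rw [alpha.mul, alpha.inv, alpha.div_apply r he, inv_div, ← mul_div_assoc,
      alpha_mul_apply_eq_of_sum_eq_zero r hS, div_self he]
  have hω0 : ω ≠ 0 := fun h => by simp [h, alpha.zero_left r hn] at hω
  obtain ⟨hωn, -⟩ := hS1 ω hω0 n hn hω
  have hδω : δ = ω * (e / r e) := by rw [hω_def, inv_mul_cancel_right₀ (div_ne_zero he hre)]
  obtain ⟨g, hg0, hδg⟩ := hδ ⟨ω, e, he, ⟨n, hn, hωn⟩, hδω⟩
  have hωg : ω = (g / e) / r (g / e) := by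
    rw [hω_def, hδg, map_div₀]
    field_simp
  have hω1 : ω = 1 := hωg ▸ hS2 (g / e) (div_ne_zero hg0 he) ⟨n, hn, hωg ▸ hωn⟩
  rw [hδω, hω1, one_mul, sum_alpha_div_apply_mul r he] at hS
  exact mul_ne_zero (Nat.cast_ne_zero.mpr (by omega)) he hS

theorem stmt_18 {K : Type*} [Field K] [CharZero K] (r : K ≃+* K)
    (e δ : K) (he : e ≠ 0) (hδ0 : δ ≠ 0)
    (hδ : (∃ (ω g : K), g ≠ 0 ∧ (∃ n : ℕ, 1 ≤ n ∧ ω ^ n = 1) ∧ δ = ω * (g / r g)) →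
      ∃ g : K, g ≠ 0 ∧ δ = g / r g)
    (hS2 : ∀ f : K, f ≠ 0 → (∃ n : ℕ, 1 ≤ n ∧ (f / r f) ^ n = 1) → f / r f = 1)
    (hS1 : ∀ f : K, f ≠ 0 → ∀ n : ℕ, 1 ≤ n → alpha r f n = 1 →
      f ^ n = 1 ∧ r f = f) :
    ∀ n : ℕ, 1 ≤ n → (∑ i ∈ Finset.range n, alpha r δ i * (r ^ i) e) ≠ 0 :=
  stmt_18_general r e δ he hδ hS2 hS1
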